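/- Sufficiency direction of the InducibleRegion correctness (case i = 1): there is no outcome u inducible by P1 at a player-1 node that lies outside S^L ∪ S^R ∪ threaten_2(T^L ∪ T^R, S^L ∪ S^R); equivalently, if u ∈ (T^L ∪ T^R) \ (S^L ∪ S^R) and for all v ∈ S^L ∪ S^R we have u_2 < v_2, then u is not inducible by P1 alone, because P2 strictly benefits from deviating from any cut c2 needed to reach u. -/

import Mathlib

/-! Finite extensive-form games of perfect information, as binary game trees. -/

inductive GameTree (n : ℕ) : Type
  | leaf (u : Fin n → ℝ) : GameTree n
  | node (owner : Fin n) (l r : GameTree n) : GameTree n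

namespace GameTree

variable {n : ℕ}

/-- Backward-induction utility vector (ties broken toward the right child). -/
noncomputable def BI : GameTree n → (Fin n → ℝ)
  | leaf u => u
  | node j l r => if (BI r) j < (BI l) j then BI l else BI r

/-- The list of all subgames (subtrees) of a game. -/
def subtrees : GameTree n → List (GameTree n)
  | leaf u => [leaf u]
  | node j l r => node j l r :: (subtrees l ++ subtrees r)

/-- Number of nodes. -/
def size : GameTree n → ℕ
  | leaf _ => 1
  | node _ l r => size l + size r + 1

/-- Number of terminal nodes. -/
def numLeaves : GameTree n → ℕ
  | leaf _ => 1
  | node _ l r => numLeaves l + numLeaves r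

def leavesList : GameTree n → List (Fin n → ℝ)
  | leaf u => [u]
  | node _ l r => leavesList l ++ leavesList r

def leafUtils : GameTree n → Set (Fin n → ℝ)
  | leaf u => {u}
  | node _ l r => leafUtils l ∪ leafUtils r

/-- Generic form: each player's utilities at the leaves are pairwise distinct. -/
def Generic (G : GameTree n) : Prop :=
  ∀ i : Fin n, (G.leavesList.map (fun u => u i)).Nodup

/-- The outcome induced by a (pure) strategy profile: at each node the owner
chooses the left child iff their strategy says `true` there. -/
noncomputable def play (s : Fin n → GameTree n → Bool) : GameTree n → (Fin n → ℝ)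
  | leaf u => u
  | node j l r => if s j (node j l r) then play s l else play s r

/-- Nash equilibrium of the (sub)game `G`: no unilateral deviation helps. -/
def NashAt (s : Fin n → GameTree n → Bool) (G : GameTree n) : Prop :=
  ∀ i : Fin n, ∀ s' : GameTree n → Bool,
    play (Function.update s i s') G i ≤ play s G i

/-- Subgame perfect equilibrium: Nash in every subgame. -/
def IsSPE (s : Fin n → GameTree n → Bool) (G : GameTree n) : Prop :=
  ∀ t ∈ subtrees G, NashAt s t

/-- Apply a cut (smart contract) of player `i`'s moves: at each `i`-owned node
the cut `c` says which children remain available (`true` = kept). -/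
def applyCut (i : Fin n) (c : GameTree n → Bool × Bool) : GameTree n → GameTree n
  | leaf u => leaf u
  | node j l r =>
    if j = i then
      if (c (node j l r)).1 && !(c (node j l r)).2 then applyCut i c l
      else if !(c (node j l r)).1 && (c (node j l r)).2 then applyCut i c r
      else node j (applyCut i c l) (applyCut i c r)
    else node j (applyCut i c l) (applyCut i c r)

/-- A valid cut never removes all moves at a node, so every remaining node can
still reach a leaf. -/
def ValidCut (i : Fin n) (c : GameTree n → Bool × Bool) (G : GameTree n) : Prop :=
  ∀ t ∈ subtrees G, c t ≠ (false, false)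

end GameTree


namespace GameTree

/-- Outcome when `P1` plays cut `c1` and then `P2` plays cut `c2`. -/
noncomputable def cutUtil (p1 p2 : Fin n) (G : GameTree n)
    (c1 c2 : GameTree n → Bool × Bool) : Fin n → ℝ :=
  BI (applyCut p2 c2 (applyCut p1 c1 G))

/-- The inducible region of the coalition `(P1, P2)`: outcomes reachable when
both choose their cuts cooperatively. -/
def RegionBoth (p1 p2 : Fin n) (G : GameTree n) : Set (Fin n → ℝ) :=
  {u | ∃ c1 c2, ValidCut p1 c1 G ∧ ValidCut p2 c2 G ∧ u = cutUtil p1 p2 G c1 c2}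

/-- The inducible region of `P1`: outcomes `P1` can enforce as the SPE outcome
of the expanded game by committing (their contract, a map `g` from `P2`-cuts to
`P1`-cuts, may react to `P2`'s cut), anticipating `P2`'s optimal cut. -/
def RegionP1 (p1 p2 : Fin n) (G : GameTree n) : Set (Fin n → ℝ) :=
  {u | ∃ g : (GameTree n → Bool × Bool) → (GameTree n → Bool × Bool),
    ∃ c2, (∀ c, ValidCut p1 (g c) G) ∧ ValidCut p2 c2 G ∧
      (∀ c', ValidCut p2 c' G →
        cutUtil p1 p2 G (g c') c' p2 ≤ cutUtil p1 p2 G (g c2) c2 p2) ∧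
      u = cutUtil p1 p2 G (g c2) c2}

end GameTree


namespace GameTree

variable {n : ℕ}

lemma self_mem_subtrees (G : GameTree n) : G ∈ subtrees G := by
  cases G <;> simp [subtrees]

lemma mem_subtrees_left {j : Fin n} {l r t : GameTree n} (h : t ∈ subtrees l) :
    t ∈ subtrees (node j l r) := by
  simp only [subtrees, List.mem_cons, List.mem_append]; tauto

lemma mem_subtrees_right {j : Fin n} {l r t : GameTree n} (h : t ∈ subtrees r) :
    t ∈ subtrees (node j l r) := by
  simp only [subtrees, List.mem_cons, List.mem_append]; tauto

lemma mem_leafUtils_iff {x : Fin n → ℝ} (G : GameTree n) :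
    x ∈ leafUtils G ↔ x ∈ leavesList G := by
  induction G with
  | leaf u => simp [leafUtils, leavesList]
  | node j l r ihl ihr =>
    simp [leafUtils, leavesList, ihl, ihr, Set.mem_union]

lemma leafUtils_nonempty (G : GameTree n) : ∃ x, x ∈ leafUtils G := by
  induction G with
  | leaf u => exact ⟨u, rfl⟩
  | node j l r ihl ihr =>
    obtain ⟨x, hx⟩ := ihl
    exact ⟨x, Or.inl hx⟩

lemma BI_mem_leafUtils (G : GameTree n) : BI G ∈ leafUtils G := by
  induction G with
  | leaf u => simp [BI, leafUtils]
  | node j l r ihl ihr =>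
    simp only [BI, leafUtils]
    split_ifs with h
    · exact Or.inl ihl
    · exact Or.inr ihr

lemma leafUtils_subtree {t G : GameTree n} (h : t ∈ subtrees G) :
    leafUtils t ⊆ leafUtils G := by
  induction G with
  | leaf u =>
    simp only [subtrees, List.mem_singleton] at h
    subst h; exact subset_rfl
  | node j l r ihl ihr =>
    simp only [subtrees, List.mem_cons, List.mem_append] at h
    rcases h with h | h | h
    · subst h; exact subset_rfl
    · exact (ihl h).trans Set.subset_union_left
    · exact (ihr h).trans Set.subset_union_right

lemma leafUtils_applyCut (i : Fin n) (c : GameTree n → Bool × Bool) (G : GameTree n) :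
    leafUtils (applyCut i c G) ⊆ leafUtils G := by
  induction G with
  | leaf u => simp [applyCut]
  | node j l r ihl ihr =>
    simp only [applyCut]
    split_ifs with h1 h2 h3
    · exact ihl.trans Set.subset_union_left
    · exact ihr.trans Set.subset_union_right
    · exact Set.union_subset (ihl.trans Set.subset_union_left)
        (ihr.trans Set.subset_union_right)
    · exact Set.union_subset (ihl.trans Set.subset_union_left)
        (ihr.trans Set.subset_union_right)

lemma applyCut_congr {i : Fin n} {c c' : GameTree n → Bool × Bool} (G : GameTree n)
    (h : ∀ t ∈ subtrees G, c t = c' t) : applyCut i c G = applyCut i c' G := by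
  induction G with
  | leaf u => simp [applyCut]
  | node j l r ihl ihr =>
    have hnode := h _ (self_mem_subtrees (node j l r))
    have hl := ihl (fun t ht => h t (mem_subtrees_left ht))
    have hr := ihr (fun t ht => h t (mem_subtrees_right ht))
    simp only [applyCut, hnode, hl, hr]

lemma exists_argmax {α : Type*} (P : α → Prop) (f : α → ℝ) (V : List ℝ)
    (hne : ∃ a, P a) (hV : ∀ a, P a → f a ∈ V) :
    ∃ a, P a ∧ ∀ b, P b → f b ≤ f a := by
  classical
  obtain ⟨a0, ha0⟩ := hne
  set s : Finset ℝ := V.toFinset.filter (fun x => ∃ a, P a ∧ f a = x) with hs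
  have hmem : ∀ b, P b → f b ∈ s := by
    intro b hb
    exact Finset.mem_filter.mpr ⟨List.mem_toFinset.mpr (hV b hb), b, hb, rfl⟩
  have hns : s.Nonempty := ⟨f a0, hmem a0 ha0⟩
  obtain ⟨a, hPa, hfa⟩ := (Finset.mem_filter.mp (s.max'_mem hns)).2
  refine ⟨a, hPa, fun b hb => ?_⟩
  calc f b ≤ s.max' hns := Finset.le_max' s _ (hmem b hb)
  _ = f a := hfa.symm

lemma cutUtil_node_cases {p1 p2 : Fin n} (hp : p1 ≠ p2) (l r : GameTree n)
    (c1 e : GameTree n → Bool × Bool) :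
    cutUtil p1 p2 (node p1 l r) c1 e = cutUtil p1 p2 l c1 e ∨
    cutUtil p1 p2 (node p1 l r) c1 e = cutUtil p1 p2 r c1 e := by
  unfold cutUtil
  rw [show applyCut p1 c1 (node p1 l r) =
    (if (c1 (node p1 l r)).1 && !(c1 (node p1 l r)).2 then applyCut p1 c1 l
      else if !(c1 (node p1 l r)).1 && (c1 (node p1 l r)).2 then applyCut p1 c1 r
      else node p1 (applyCut p1 c1 l) (applyCut p1 c1 r)) from by
    simp [applyCut]]
  split_ifs with h1 h2
  · exact Or.inl rfl
  · exact Or.inr rfl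
  · rw [show applyCut p2 e (node p1 (applyCut p1 c1 l) (applyCut p1 c1 r)) =
      node p1 (applyCut p2 e (applyCut p1 c1 l)) (applyCut p2 e (applyCut p1 c1 r)) from by
        simp [applyCut, hp]]
    rw [show BI (node p1 (applyCut p2 e (applyCut p1 c1 l)) (applyCut p2 e (applyCut p1 c1 r))) =
      if (BI (applyCut p2 e (applyCut p1 c1 r))) p1 < (BI (applyCut p2 e (applyCut p1 c1 l))) p1
      then BI (applyCut p2 e (applyCut p1 c1 l)) else BI (applyCut p2 e (applyCut p1 c1 r)) from rfl]
    split_ifs with h3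
    · exact Or.inl rfl
    · exact Or.inr rfl

end GameTree

open GameTree in
/-- Sufficiency direction of the `InducibleRegion` correctness,
case `i = 1`: at a node owned by `P1`, no outcome outside
`S^L ∪ S^R ∪ threaten₂(T^L ∪ T^R, S^L ∪ S^R)` is inducible by `P1`;
equivalently, if `u ∈ (T^L ∪ T^R) \ (S^L ∪ S^R)` and `u₂ < v₂` for all
`v ∈ S^L ∪ S^R`, then `u` is not inducible by `P1` alone, since `P2` strictly
benefits from deviating from any cut needed to reach `u`. -/
theorem inducibleRegion_sufficiency {n : ℕ} (p1 p2 : Fin n) (hp : p1 ≠ p2)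
    (l r : GameTree n) (hG : (GameTree.node p1 l r).Generic)
    (u : Fin n → ℝ)
    (hu : u ∈ RegionBoth p1 p2 l ∪ RegionBoth p1 p2 r)
    (hnot : u ∉ RegionP1 p1 p2 l ∪ RegionP1 p1 p2 r)
    (hdom : ∀ v ∈ RegionP1 p1 p2 l ∪ RegionP1 p1 p2 r, u p2 < v p2) :
    u ∉ RegionP1 p1 p2 (GameTree.node p1 l r) := by
  classical
  rintro ⟨g, c2, hg, hc2, hopt, hueq⟩
  -- disjointness of leaf utilities of l and r (from genericity)
  have hdisj : ∀ x, x ∈ leafUtils l → x ∈ leafUtils r → False := by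
    intro x hxl hxr
    have hn := hG p2
    rw [show (GameTree.node p1 l r).leavesList = l.leavesList ++ r.leavesList from rfl,
      List.map_append, List.nodup_append] at hn
    exact hn.2.2 _ (List.mem_map_of_mem ((mem_leafUtils_iff l).mp hxl))
      _ (List.mem_map_of_mem ((mem_leafUtils_iff r).mp hxr)) rfl
  -- the key consequence of P2-optimality at the node
  have hstar : ∀ e, ValidCut p2 e (GameTree.node p1 l r) →
      cutUtil p1 p2 l (g e) e p2 ≤ u p2 ∨ cutUtil p1 p2 r (g e) e p2 ≤ u p2 := by
    intro e he
    have h1 : cutUtil p1 p2 (GameTree.node p1 l r) (g e) e p2 ≤ u p2 := by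
      have := hopt e he
      rwa [← hueq] at this
    rcases cutUtil_node_cases hp l r (g e) e with h | h
    · exact Or.inl (h ▸ h1)
    · exact Or.inr (h ▸ h1)
  -- the glue of a left cut and a right cut
  set glue : (GameTree n → Bool × Bool) → (GameTree n → Bool × Bool) →
      GameTree n → Bool × Bool :=
    fun c d t => if leafUtils t ⊆ leafUtils l then c t
      else if leafUtils t ⊆ leafUtils r then d t else (true, true) with hglue
  have hnotsub : ∀ t : GameTree n, leafUtils t ⊆ leafUtils r →
      ¬ leafUtils t ⊆ leafUtils l := by
    intro t h1 h2
    obtain ⟨x, hx⟩ := leafUtils_nonempty t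
    exact hdisj x (h2 hx) (h1 hx)
  have hglueL : ∀ c d c1, cutUtil p1 p2 l c1 (glue c d) = cutUtil p1 p2 l c1 c := by
    intro c d c1
    unfold cutUtil
    refine congrArg GameTree.BI (applyCut_congr _ ?_)
    intro t ht
    have h1 : leafUtils t ⊆ leafUtils l :=
      (leafUtils_subtree ht).trans (leafUtils_applyCut p1 c1 l)
    simp only [hglue, if_pos h1]
  have hglueR : ∀ c d c1, cutUtil p1 p2 r c1 (glue c d) = cutUtil p1 p2 r c1 d := by
    intro c d c1
    unfold cutUtil
    refine congrArg GameTree.BI (applyCut_congr _ ?_)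
    intro t ht
    have h1 : leafUtils t ⊆ leafUtils r :=
      (leafUtils_subtree ht).trans (leafUtils_applyCut p1 c1 r)
    simp only [hglue, if_neg (hnotsub t h1), if_pos h1]
  have hglueValid : ∀ c d, ValidCut p2 c l → ValidCut p2 d r →
      ValidCut p2 (glue c d) (GameTree.node p1 l r) := by
    intro c d hcl hdr t ht
    rw [show (GameTree.node p1 l r).subtrees =
      GameTree.node p1 l r :: (l.subtrees ++ r.subtrees) from rfl] at ht
    simp only [List.mem_cons, List.mem_append] at ht
    rcases ht with ht | ht | ht
    · subst ht
      have h1 : ¬ leafUtils (GameTree.node p1 l r) ⊆ leafUtils l := by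
        intro hsub
        obtain ⟨y, hy⟩ := leafUtils_nonempty r
        exact hdisj y (hsub (Or.inr hy)) hy
      have h2 : ¬ leafUtils (GameTree.node p1 l r) ⊆ leafUtils r := by
        intro hsub
        obtain ⟨y, hy⟩ := leafUtils_nonempty l
        exact hdisj y hy (hsub (Or.inl hy))
      simp [hglue, h1, h2]
    · have h1 : leafUtils t ⊆ leafUtils l := leafUtils_subtree ht
      simp only [hglue, if_pos h1]
      exact hcl t ht
    · have h1 : leafUtils t ⊆ leafUtils r := leafUtils_subtree ht
      simp only [hglue, if_neg (hnotsub t h1), if_pos h1]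
      exact hdr t ht
  have hgl : ∀ c, ValidCut p1 (g c) l := fun c t ht => hg c t (mem_subtrees_left ht)
  have hgr : ∀ c, ValidCut p1 (g c) r := fun c t ht => hg c t (mem_subtrees_right ht)
  have hmemval : ∀ (G' : GameTree n) c1 c,
      cutUtil p1 p2 G' c1 c p2 ∈ (G'.leavesList.map (fun x => x p2)) := by
    intro G' c1 c
    have h1 := BI_mem_leafUtils (applyCut p2 c (applyCut p1 c1 G'))
    have h2 := (leafUtils_applyCut p2 c (applyCut p1 c1 G')).trans
      (leafUtils_applyCut p1 c1 G')
    exact List.mem_map_of_mem ((mem_leafUtils_iff G').mp (h2 h1))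
  have htriv : ∀ G' : GameTree n, ValidCut p2 (fun _ => (true, true)) G' := by
    intro G' t _
    simp
  by_cases hcase : ∀ c, ValidCut p2 c l → ∃ d, ValidCut p2 d r ∧
      u p2 < cutUtil p1 p2 r (g (glue c d)) (glue c d) p2
  · -- Case B: P2 can always threaten on the right; build a low-value element of RegionP1 l
    choose D hDvalid hDgt using hcase
    set gl : (GameTree n → Bool × Bool) → (GameTree n → Bool × Bool) :=
      fun c => if h : ValidCut p2 c l then g (glue c (D c h)) else g c with hglD
    have hle : ∀ c, (h : ValidCut p2 c l) → cutUtil p1 p2 l (gl c) c p2 ≤ u p2 := by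
      intro c h
      have hev : ValidCut p2 (glue c (D c h)) (GameTree.node p1 l r) :=
        hglueValid c (D c h) h (hDvalid c h)
      have := hstar (glue c (D c h)) hev
      rcases this with h1 | h1
      · rw [hglD]
        simp only [dif_pos h]
        rw [show cutUtil p1 p2 l (g (glue c (D c h))) c =
          cutUtil p1 p2 l (g (glue c (D c h))) (glue c (D c h)) from
          (hglueL c (D c h) (g (glue c (D c h)))).symm]
        exact h1
      · exact absurd h1 (not_le.mpr (hDgt c h))
    obtain ⟨cstar, hcstar, hmax⟩ := exists_argmax (fun c => ValidCut p2 c l)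
      (fun c => cutUtil p1 p2 l (gl c) c p2) (l.leavesList.map (fun x => x p2))
      ⟨fun _ => (true, true), htriv l⟩ (fun a _ => hmemval l (gl a) a)
    have hv : cutUtil p1 p2 l (gl cstar) cstar ∈ RegionP1 p1 p2 l := by
      refine ⟨gl, cstar, ?_, hcstar, hmax, rfl⟩
      intro c
      show ValidCut p1 (if h : ValidCut p2 c l then g (glue c (D c h)) else g c) l
      split_ifs <;> apply hgl
    have := hdom _ (Or.inl hv)
    exact absurd (hle cstar hcstar) (not_le.mpr this)
  · -- Case A: some left cut makes every right threat weak; build it in RegionP1 r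
    push_neg at hcase
    obtain ⟨chat, hchat, hA⟩ := hcase
    set gr : (GameTree n → Bool × Bool) → (GameTree n → Bool × Bool) :=
      fun d => g (glue chat d) with hgrD
    have hle : ∀ d, ValidCut p2 d r → cutUtil p1 p2 r (gr d) d p2 ≤ u p2 := by
      intro d hd
      rw [hgrD]
      rw [show cutUtil p1 p2 r (g (glue chat d)) d =
        cutUtil p1 p2 r (g (glue chat d)) (glue chat d) from
        (hglueR chat d (g (glue chat d))).symm]
      exact hA d hd
    obtain ⟨dstar, hdstar, hmax⟩ := exists_argmax (fun d => ValidCut p2 d r)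
      (fun d => cutUtil p1 p2 r (gr d) d p2) (r.leavesList.map (fun x => x p2))
      ⟨fun _ => (true, true), htriv r⟩ (fun a _ => hmemval r (gr a) a)
    have hv : cutUtil p1 p2 r (gr dstar) dstar ∈ RegionP1 p1 p2 r :=
      ⟨gr, dstar, fun c => hgr (glue chat c), hdstar, hmax, rfl⟩
    have := hdom _ (Or.inr hv)
    exact absurd (hle dstar hdstar) (not_le.mpr this)
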